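/- Connection to principal component regression: Let M = ℝ with the usual metric, and let D_n = {(x_i,y_i)}_{i=1}^n ⊂ ℝ^p × ℝ be a finite dataset identified with its empirical measure. For every λ ≥ 0 and every x ∈ ℝ^p, the λ-regularized Fréchet regression function satisfies φ^λ_{D_n}(x) = ȳ + β̂_λ^T (x − μ_{D_n}), where ȳ = (1/n)Σ_{i=1}^n y_i and β̂_λ = [ SVT_λ(Σ_{D_n}) ]^† · ( (1/n) Σ_{i=1}^n (x_i − μ_{D_n})·(y_i − ȳ) ). -/

import Mathlib

/-!
For real responses the risk at `x` is a weighted least-squares criterion,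
`R(y) = n⁻¹ ∑ wᵢ (yᵢ - y)²` with `wᵢ = 1 + (xᵢ - μ)ᵀ P (x - μ)` and `P = SVT_λ(Σ)†`.
The weights may be negative, but only two of their moments matter: because the centred
covariates sum to zero, `∑ wᵢ = n` and, `P` being symmetric, `∑ wᵢ yᵢ = n (ȳ + β̂ᵀ (x - μ))`.
Completing the square then gives `R(y) = R(y*) + (y - y*)²` with `y* = ȳ + β̂ᵀ (x - μ)`.
Symmetry of `P` follows from uniqueness of the Moore–Penrose inverse, once one knows that
`SVT_λ(Σ)` is symmetric: the thresholding projection is a function of `ΣᵀΣ = Σ²`, hence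
commutes with `Σ`.
-/

open MeasureTheory Matrix Filter
open scoped ENNReal NNReal Topology Classical

noncomputable section

namespace FrechetPCR

/-- The four Penrose conditions characterizing the Moore–Penrose pseudoinverse. -/
def IsMoorePenrose {n m : ℕ} (A : Matrix (Fin n) (Fin m) ℝ) (B : Matrix (Fin m) (Fin n) ℝ) : Prop :=
  A * B * A = A ∧ B * A * B = B ∧ (A * B)ᵀ = A * B ∧ (B * A)ᵀ = B * A

/-- The Moore–Penrose pseudoinverse of a real matrix (it exists and is unique). -/
def pinv {n m : ℕ} (A : Matrix (Fin n) (Fin m) ℝ) : Matrix (Fin m) (Fin n) ℝ :=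
  if h : ∃ B, IsMoorePenrose A B then h.choose else 0

/-- Spectral projection of a symmetric matrix onto the span of eigenvectors
with eigenvalue > t. -/
def specProjGT {m : ℕ} (S : Matrix (Fin m) (Fin m) ℝ) (t : ℝ) : Matrix (Fin m) (Fin m) ℝ :=
  if hS : S.IsHermitian then
    (hS.eigenvectorUnitary : Matrix (Fin m) (Fin m) ℝ) *
      Matrix.diagonal (fun i => if t < hS.eigenvalues i then (1 : ℝ) else 0) *
      star (hS.eigenvectorUnitary : Matrix (Fin m) (Fin m) ℝ)
  else 0

/-- Hard singular value thresholding: retains the part of `A` corresponding to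
singular values exceeding `l` (for `l ≥ 0`): if `A = Σ sᵢ uᵢ vᵢᵀ` is an SVD then
`SVT l A = Σ sᵢ 1{sᵢ > l} uᵢ vᵢᵀ = A · Π` where `Π` is the spectral projection of
`AᵀA` onto eigenvalues `> l²`. -/
def SVT {n m : ℕ} (l : ℝ) (A : Matrix (Fin n) (Fin m) ℝ) : Matrix (Fin n) (Fin m) ℝ :=
  A * specProjGT (Aᵀ * A) (l ^ 2)

/-- Mahalanobis seminorm of `v` induced by the positive semidefinite matrix `S`. -/
def mahal {p : ℕ} (S : Matrix (Fin p) (Fin p) ℝ) (v : Fin p → ℝ) : ℝ :=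
  Real.sqrt (v ⬝ᵥ pinv S *ᵥ v)

/-- Euclidean (ℓ²) norm of a vector. -/
def euclNorm {n : ℕ} (v : Fin n → ℝ) : ℝ :=
  Real.sqrt (∑ i, v i ^ 2)

/-- Spectral (ℓ²-operator) norm of a matrix. -/
def spectralNorm {n m : ℕ} (A : Matrix (Fin n) (Fin m) ℝ) : ℝ :=
  ‖(Matrix.toEuclideanLin A).toContinuousLinearMap‖

/-- `σ^λ(A)`: the smallest singular value of `A` exceeding `l`
(with junk value `sInf ∅ = 0` when no singular value exceeds `l`). -/
def sigmaGT {n m : ℕ} (A : Matrix (Fin n) (Fin m) ℝ) (l : ℝ) : ℝ :=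
  sInf {s : ℝ | 0 ≤ s ∧ l < s ∧ s ^ 2 ∈ spectrum ℝ (Aᵀ * A)}

/-- Covariate mean of a measure on ℝ^p × M. -/
def covMean {p : ℕ} {M : Type*} [MeasurableSpace M] (ν : Measure ((Fin p → ℝ) × M)) :
    Fin p → ℝ :=
  ∫ z, z.1 ∂ν

/-- Covariate covariance of a measure on ℝ^p × M. -/
def covCov {p : ℕ} {M : Type*} [MeasurableSpace M] (ν : Measure ((Fin p → ℝ) × M)) :
    Matrix (Fin p) (Fin p) ℝ :=
  Matrix.of fun i j => ∫ z, (z.1 i - covMean ν i) * (z.1 j - covMean ν j) ∂ν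

/-- λ-regularized weight function
`w^λ_ν(x',x) = 1 + (x'−μ_ν)ᵀ [SVT_λ(Σ_ν)]† (x−μ_ν)`. -/
def weight {p : ℕ} {M : Type*} [MeasurableSpace M] (l : ℝ) (ν : Measure ((Fin p → ℝ) × M))
    (x' x : Fin p → ℝ) : ℝ :=
  1 + (x' - covMean ν) ⬝ᵥ pinv (SVT l (covCov ν)) *ᵥ (x - covMean ν)

/-- λ-regularized Fréchet risk `R^λ_ν(y;x) = E_ν[ w^λ_ν(X,x) · d²(Y,y) ]`. -/
def risk {p : ℕ} {M : Type*} [MetricSpace M] [MeasurableSpace M] (l : ℝ)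
    (ν : Measure ((Fin p → ℝ) × M)) (y : M) (x : Fin p → ℝ) : ℝ :=
  ∫ z, weight l ν z.1 x * dist z.2 y ^ 2 ∂ν

/-- Empirical measure of a finite dataset. -/
def empOf {E : Type*} [MeasurableSpace E] {n : ℕ} (D : Fin n → E) : Measure E :=
  (n : ℝ≥0∞)⁻¹ • ∑ i, Measure.dirac (D i)

/-- Empirical measure of the first `n` elements of a sequence of observations. -/
def empSeq {E : Type*} [MeasurableSpace E] (D : ℕ → E) (n : ℕ) : Measure E :=
  (n : ℝ≥0∞)⁻¹ • ∑ i ∈ Finset.range n, Measure.dirac (D i)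

/-- ε-covering number of a set in a metric space: the minimal cardinality of a cover
by closed ε-balls (`⊤` if no finite cover exists). -/
def coveringNumber {M : Type*} [MetricSpace M] (S : Set M) (ε : ℝ) : ℝ≥0∞ :=
  ⨅ (t : Finset M) (_ : S ⊆ ⋃ y ∈ t, Metric.closedBall y ε), (t.card : ℝ≥0∞)

/-- The n×n centering matrix `I − (1/n) 1ₙ 1ₙᵀ`. -/
def centering (n : ℕ) : Matrix (Fin n) (Fin n) ℝ :=
  1 - (n : ℝ)⁻¹ • Matrix.of fun _ _ => (1 : ℝ)

lemma IsMoorePenrose.unique {n m : ℕ} {A : Matrix (Fin n) (Fin m) ℝ}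
    {B C : Matrix (Fin m) (Fin n) ℝ} (hB : IsMoorePenrose A B) (hC : IsMoorePenrose A C) : B = C := by
  obtain ⟨hB1, hB2, hB3, hB4⟩ := hB
  obtain ⟨hC1, hC2, hC3, hC4⟩ := hC
  have hAB : A * B = A * C := by
    calc A * B = (A * B)ᵀ := hB3.symm
    _ = (A * C * A * B)ᵀ := by rw [hC1]
    _ = (A * B)ᵀ * (A * C)ᵀ := by rw [Matrix.mul_assoc, ← transpose_mul]
    _ = A * B * A * C := by rw [hB3, hC3, Matrix.mul_assoc (A * B)]
    _ = A * C := by rw [hB1]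
  have hBA : B * A = C * A := by
    calc B * A = (B * A)ᵀ := hB4.symm
    _ = (B * (A * C * A))ᵀ := by rw [hC1]
    _ = (C * A)ᵀ * (B * A)ᵀ := by rw [← transpose_mul]; simp only [Matrix.mul_assoc]
    _ = C * (A * B * A) := by rw [hB4, hC4]; simp only [Matrix.mul_assoc]
    _ = C * A := by rw [hB1]
  calc B = B * A * B := hB2.symm
  _ = C * A * C := by rw [hBA, Matrix.mul_assoc, hAB, ← Matrix.mul_assoc]
  _ = C := hC2

lemma IsMoorePenrose.transpose {n m : ℕ} {A : Matrix (Fin n) (Fin m) ℝ}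
    {B : Matrix (Fin m) (Fin n) ℝ} (h : IsMoorePenrose A B) : IsMoorePenrose Aᵀ Bᵀ := by
  obtain ⟨h1, h2, h3, h4⟩ := h
  refine ⟨?_, ?_, ?_, ?_⟩
  · rw [← transpose_mul, ← transpose_mul, ← Matrix.mul_assoc, h1]
  · rw [← transpose_mul, ← transpose_mul, ← Matrix.mul_assoc, h2]
  · rw [← transpose_mul, transpose_transpose, h4]
  · rw [← transpose_mul, transpose_transpose, h3]

lemma _root_.Matrix.IsSymm.pinv {m : ℕ} {A : Matrix (Fin m) (Fin m) ℝ} (hA : A.IsSymm) :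
    (pinv A).IsSymm := by
  unfold FrechetPCR.pinv
  split_ifs with h
  · have hB := h.choose_spec
    exact (hA.eq ▸ hB.transpose).unique hB
  · exact isSymm_zero

lemma specProjGT_eq_cfc {m : ℕ} (S : Matrix (Fin m) (Fin m) ℝ) (t : ℝ) :
    specProjGT S t = cfc (fun s => if t < s then (1 : ℝ) else 0) S := by
  unfold specProjGT
  split_ifs with hS
  · rw [hS.cfc_eq, IsHermitian.cfc, Unitary.conjStarAlgAut_apply]
    rfl
  · exact (cfc_apply_of_not_predicate S hS).symm

lemma _root_.Commute.specProjGT {m : ℕ} {S X : Matrix (Fin m) (Fin m) ℝ} (h : Commute S X)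
    (t : ℝ) : Commute (specProjGT S t) X := by
  rw [specProjGT_eq_cfc]
  exact h.cfc_real _

lemma isSymm_specProjGT {m : ℕ} (S : Matrix (Fin m) (Fin m) ℝ) (t : ℝ) :
    (specProjGT S t).IsSymm := by
  rw [specProjGT_eq_cfc]
  exact isHermitian_iff_isSymm.mp (cfc_predicate _ S)

lemma _root_.Matrix.IsSymm.SVT {m : ℕ} {S : Matrix (Fin m) (Fin m) ℝ} (hS : S.IsSymm) (l : ℝ) :
    (SVT l S).IsSymm := by
  have hcomm : Commute (S * S) S := (Commute.refl S).mul_left (Commute.refl S)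
  rw [IsSymm, FrechetPCR.SVT, transpose_mul, (isSymm_specProjGT _ _).eq, hS.eq]
  exact (hcomm.specProjGT _).eq

lemma isSymm_covCov {p : ℕ} {M : Type*} [MeasurableSpace M] (ν : Measure ((Fin p → ℝ) × M)) :
    (covCov ν).IsSymm := by
  ext i j
  simp only [transpose_apply, covCov, of_apply, mul_comm]

lemma integral_empOf {E F : Type*} [MeasurableSpace E] [MeasurableSingletonClass E]
    [NormedAddCommGroup F] [NormedSpace ℝ F] [CompleteSpace F] {n : ℕ} (D : Fin n → E)
    (f : E → F) : ∫ z, f z ∂(empOf D) = (n : ℝ)⁻¹ • ∑ i, f (D i) := by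
  rw [empOf, integral_smul_measure, integral_finsetSum_measure]
  · simp [integral_dirac]
  · exact fun i _ => (integrable_const (f (D i))).congr (ae_eq_dirac f).symm

lemma covMean_empOf {p n : ℕ} {M : Type*} [MeasurableSpace M] [MeasurableSingletonClass M]
    (xd : Fin n → Fin p → ℝ) (yd : Fin n → M) :
    covMean (empOf fun i => (xd i, yd i)) = (n : ℝ)⁻¹ • ∑ i, xd i :=
  integral_empOf _ Prod.fst

lemma sum_sub_inv_smul_sum {E : Type*} [AddCommGroup E] [Module ℝ E] {n : ℕ} (hn : n ≠ 0)
    (v : Fin n → E) : ∑ i, (v i - (n : ℝ)⁻¹ • ∑ j, v j) = 0 := by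
  rw [Finset.sum_sub_distrib, Finset.sum_const, Finset.card_univ, Fintype.card_fin,
    ← Nat.cast_smul_eq_nsmul ℝ, smul_smul, mul_inv_cancel₀ (Nat.cast_ne_zero.mpr hn), one_smul,
    sub_self]

lemma risk_empOf {p n : ℕ} {M : Type*} [MetricSpace M] [MeasurableSpace M]
    [MeasurableSingletonClass M] (l : ℝ) (D : Fin n → (Fin p → ℝ) × M) (y : M)
    (x : Fin p → ℝ) :
    risk l (empOf D) y x = (n : ℝ)⁻¹ * ∑ i, weight l (empOf D) (D i).1 x * dist (D i).2 y ^ 2 :=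
  integral_empOf D _

lemma sum_one_add_dotProduct_mul {ι k : Type*} [Fintype k] (s : Finset ι) (u : ι → k → ℝ)
    (v : k → ℝ) (y : ι → ℝ) (c : ℝ) (hu : ∑ i ∈ s, u i = 0) :
    ∑ i ∈ s, (1 + u i ⬝ᵥ v) * y i = ∑ i ∈ s, y i + (∑ i ∈ s, (y i - c) • u i) ⬝ᵥ v := by
  have hyu : ∑ i ∈ s, y i • u i = ∑ i ∈ s, (y i - c) • u i := by
    simp only [sub_smul, Finset.sum_sub_distrib, ← Finset.smul_sum, hu, smul_zero, sub_zero]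
  calc ∑ i ∈ s, (1 + u i ⬝ᵥ v) * y i = ∑ i ∈ s, (y i + (y i • u i) ⬝ᵥ v) :=
        Finset.sum_congr rfl fun i _ => by rw [smul_dotProduct, smul_eq_mul]; ring
  _ = _ := by rw [Finset.sum_add_distrib, ← sum_dotProduct, hyu]

lemma _root_.Matrix.IsSymm.mulVec_dotProduct_comm {k : Type*} [Fintype k]
    {P : Matrix k k ℝ} (hP : P.IsSymm) (u v : k → ℝ) : P *ᵥ u ⬝ᵥ v = u ⬝ᵥ P *ᵥ v := by
  rw [dotProduct_comm, ← hP.eq, dotProduct_transpose_mulVec, hP.eq]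

lemma sum_mul_sub_sq_eq {ι : Type*} (s : Finset ι) (w y : ι → ℝ) {m : ℝ}
    (hm : ∑ i ∈ s, w i * y i = (∑ i ∈ s, w i) * m) (c : ℝ) :
    ∑ i ∈ s, w i * (y i - c) ^ 2
      = ∑ i ∈ s, w i * (y i - m) ^ 2 + (∑ i ∈ s, w i) * (c - m) ^ 2 := by
  have hexp : ∀ i, w i * (y i - c) ^ 2
      = w i * (y i - m) ^ 2 + (w i * y i - w i * m) * (2 * (m - c)) + w i * (c - m) ^ 2 :=
    fun i => by ring
  rw [Finset.sum_congr rfl fun i _ => hexp i, Finset.sum_add_distrib, Finset.sum_add_distrib,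
    ← Finset.sum_mul, Finset.sum_sub_distrib, ← Finset.sum_mul, hm, sub_self, zero_mul, add_zero,
    Finset.sum_mul]

theorem pcr_connection_general
    {p n : ℕ} (hn : 0 < n)
    (xd : Fin n → Fin p → ℝ) (yd : Fin n → ℝ)
    (l : ℝ) (x : Fin p → ℝ) :
    ∀ νD : Measure ((Fin p → ℝ) × ℝ), νD = empOf (fun i => (xd i, yd i)) →
    ∀ ybar : ℝ, ybar = (n : ℝ)⁻¹ * ∑ i, yd i →
    ∀ βh : Fin p → ℝ,
      βh = pinv (SVT l (covCov νD)) *ᵥ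
        ((n : ℝ)⁻¹ • ∑ i, (yd i - ybar) • (xd i - covMean νD)) →
    -- φ^λ_{D_n}(x) = ȳ + β̂_λᵀ (x − μ_{D_n}) : it is the unique minimizer of the risk
    (∀ y : ℝ, risk l νD (ybar + βh ⬝ᵥ (x - covMean νD)) x ≤ risk l νD y x) ∧
    (∀ y : ℝ, (∀ y' : ℝ, risk l νD y x ≤ risk l νD y' x) →
      y = ybar + βh ⬝ᵥ (x - covMean νD)) := by
  rintro ν hν ybar hybar β rfl
  set μ := covMean ν with hμ
  set P := pinv (SVT l (covCov ν))
  set c := ∑ i, (yd i - ybar) • (xd i - μ) with hc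
  set ystar := ybar + (P *ᵥ ((n : ℝ)⁻¹ • c)) ⬝ᵥ (x - μ) with hystar
  have hcent : ∑ i, (xd i - μ) = 0 := by
    rw [hμ, hν, covMean_empOf]
    exact sum_sub_inv_smul_sum hn.ne' xd
  have hweight : ∀ i, weight l ν (xd i) x = 1 + (xd i - μ) ⬝ᵥ P *ᵥ (x - μ) := fun i => rfl
  have hw : ∑ i, weight l ν (xd i) x = n := by
    simp only [hweight]
    simpa using sum_one_add_dotProduct_mul Finset.univ _ (P *ᵥ (x - μ)) 1 1 hcent
  have hwy : ∑ i, weight l ν (xd i) x * yd i = (∑ i, weight l ν (xd i) x) * ystar := by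
    have hP : P.IsSymm := ((isSymm_covCov ν).SVT l).pinv
    rw [hw, hystar, mulVec_smul, smul_dotProduct, hP.mulVec_dotProduct_comm, smul_eq_mul, hybar]
    simp only [hweight]
    rw [sum_one_add_dotProduct_mul Finset.univ _ _ yd ybar hcent, ← hc]
    field_simp
  have hrisk : ∀ y, risk l ν y x = risk l ν ystar x + (y - ystar) ^ 2 := by
    intro y
    simp only [hν, risk_empOf, Real.dist_eq, sq_abs]
    rw [← hν, sum_mul_sub_sq_eq _ _ _ hwy y, sum_mul_sub_sq_eq _ _ _ hwy ystar, hw]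
    field_simp
  refine ⟨fun y => ?_, fun y hy => ?_⟩
  · rw [hrisk y]
    exact le_add_of_nonneg_right (sq_nonneg (y - ystar))
  · have h := hy ystar
    rw [hrisk y] at h
    have hsq : (y - ystar) ^ 2 = 0 := le_antisymm (by linarith) (sq_nonneg _)
    exact sub_eq_zero.mp (pow_eq_zero_iff two_ne_zero |>.mp hsq)

/-- **Connection to principal component regression** (Section 3.2): for real responses, the
λ-regularized Fréchet regression function is the principal component regression predictor. -/
theorem pcr_connection
    {p n : ℕ} (hn : 0 < n)
    (xd : Fin n → Fin p → ℝ) (yd : Fin n → ℝ)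
    (l : ℝ) (hl : 0 ≤ l) (x : Fin p → ℝ) :
    ∀ νD : Measure ((Fin p → ℝ) × ℝ), νD = empOf (fun i => (xd i, yd i)) →
    ∀ ybar : ℝ, ybar = (n : ℝ)⁻¹ * ∑ i, yd i →
    ∀ βh : Fin p → ℝ,
      βh = pinv (SVT l (covCov νD)) *ᵥ
        ((n : ℝ)⁻¹ • ∑ i, (yd i - ybar) • (xd i - covMean νD)) →
    -- φ^λ_{D_n}(x) = ȳ + β̂_λᵀ (x − μ_{D_n}) : it is the unique minimizer of the risk
    (∀ y : ℝ, risk l νD (ybar + βh ⬝ᵥ (x - covMean νD)) x ≤ risk l νD y x) ∧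
    (∀ y : ℝ, (∀ y' : ℝ, risk l νD y x ≤ risk l νD y' x) →
      y = ybar + βh ⬝ᵥ (x - covMean νD)) :=
  pcr_connection_general hn xd yd l x

end FrechetPCR
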